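/- Let (T, m) be a complete local (Noetherian) ring containing the rational numbers with dim T ≥ 1, and let P = {C_1, …, C_n} be a partition of Min(T) such that whenever p ∈ C_i is a singular minimal prime, C_i = {p}. Let (S, S ∩ m) be a CGIP-subring of T, let I be a finitely generated ideal of S, and let c ∈ IT ∩ S. Then there exists a CGIP-subring R of T with S ⊆ R and c ∈ IR. -/

import Mathlib

/-! Common definitions: regular/singular primes, catenary and universally catenary rings,
excellent local rings, quasi-local subrings, completions of subrings, the invariants
`d₁(T)` and `d₂(T)`, feasible partitions and (C)IP-subrings, partitions of `Min(T)` and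
(C)GIP-subrings, and witnesses for "T is the completion of a countable (excellent) local
ring". -/

universe u v

section RegularDefs

/-- A ring is a regular local ring if it is Noetherian, local, and its maximal ideal
can be generated by `dim R` many elements. -/
def IsRegularLocal (R : Type v) [CommRing R] : Prop :=
  ∃ _h : IsLocalRing R, IsNoetherianRing R ∧
    ∃ s : Finset R, Ideal.span (s : Set R) = IsLocalRing.maximalIdeal R ∧
      (s.card : WithBot (WithTop ℕ)) = ringKrullDim R

/-- A ring is regular if it is Noetherian and all its localizations at primes are
regular local rings. -/
def IsRegularRingOfLocalizations (R : Type v) [CommRing R] : Prop :=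
  IsNoetherianRing R ∧ ∀ (p : Ideal R) [p.IsPrime], IsRegularLocal (Localization.AtPrime p)

/-- A (prime) ideal `p` of `T` is nonsingular if `T_p` is a regular local ring. -/
def NonsingularAt {T : Type v} [CommRing T] (p : Ideal T) : Prop :=
  ∃ hp : p.IsPrime, IsRegularLocal (@Localization.AtPrime T _ p hp)

/-- `T_p` is a field. -/
def FieldAtPrime {T : Type v} [CommRing T] (p : Ideal T) : Prop :=
  ∃ hp : p.IsPrime, IsField (@Localization.AtPrime T _ p hp)

end RegularDefs

section Catenary

/-- A chain is saturated if each step is a covering relation. -/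
def IsSaturatedChain {α : Type v} [Preorder α] (c : LTSeries α) : Prop :=
  ∀ i : Fin c.length, c.toFun i.castSucc ⋖ c.toFun i.succ

/-- A ring is catenary if any two saturated chains of primes with the same endpoints
have the same length. -/
def IsCatenaryRing (R : Type v) [CommRing R] : Prop :=
  ∀ c₁ c₂ : LTSeries (PrimeSpectrum R),
    IsSaturatedChain c₁ → IsSaturatedChain c₂ →
      c₁.head = c₂.head → c₁.last = c₂.last → c₁.length = c₂.length

/-- A ring is universally catenary if every finite type algebra over it is catenary. -/
def IsUniversallyCatenary (A : Type v) [CommRing A] : Prop :=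
  ∀ (B : Type v) [CommRing B] [Algebra A B], Algebra.FiniteType A B → IsCatenaryRing B

end Catenary

section Excellent

/-- The formal fibers of a local ring `A` are geometrically regular: for every
prime `p` of `A` and every finite field extension `L` of the residue field
`k(p) = Frac(A/p)` (the residue field of the localization of `A` at `p`),
the ring `Â ⊗_A L` is regular, where `Â` is the completion of `A`
at its maximal ideal. -/
def HasGeomRegularFormalFibers (A : Type u) [CommRing A] [IsLocalRing A] : Prop :=
  ∀ (p : Ideal A) [p.IsPrime] (L : Type u) [Field L] [Algebra A L]
    [Algebra (IsLocalRing.ResidueField (Localization.AtPrime p)) L]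
    [IsScalarTower A (IsLocalRing.ResidueField (Localization.AtPrime p)) L],
    FiniteDimensional (IsLocalRing.ResidueField (Localization.AtPrime p)) L →
      IsRegularRingOfLocalizations
        (TensorProduct A (AdicCompletion (IsLocalRing.maximalIdeal A) A) L)

/-- A local ring is excellent if it is Noetherian, universally catenary,
and its formal fibers are geometrically regular. -/
def IsExcellentLocalRing (A : Type u) [CommRing A] [IsLocalRing A] : Prop :=
  IsNoetherianRing A ∧ IsUniversallyCatenary A ∧ HasGeomRegularFormalFibers A

end Excellent

section Subrings

variable {T : Type u} [CommRing T] [IsLocalRing T]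

/-- A subring `(R, R ∩ m)` of a local ring `(T, m)` is quasi-local with maximal
ideal `R ∩ m`. -/
def IsQuasiLocalSubring (R : Subring T) : Prop :=
  ∃ h : IsLocalRing R,
    @IsLocalRing.maximalIdeal R _ h = (IsLocalRing.maximalIdeal T).comap R.subtype

/-- The `(S ∩ m)`-adic completion of the subring `S` of the local ring `(T, m)` is equal
to `T`, compatibly with the inclusion `S ⊆ T`. -/
def IsCompletionOfSubring (S : Subring T) : Prop :=
  ∃ e : AdicCompletion ((IsLocalRing.maximalIdeal T).comap S.subtype) S ≃+* T,
    ∀ s : S,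
      e (algebraMap S (AdicCompletion ((IsLocalRing.maximalIdeal T).comap S.subtype) S) s)
        = (s : T)

end Subrings

section MinimalPrimeInvariants

variable (T : Type u) [CommRing T]

/-- The equivalence relation `∼₁` on the minimal primes of `T`: `p ∼₁ q` iff `p = q` or
(`T_p` and `T_q` are fields and `dim(T/p) = dim(T/q)`). -/
def sim1 : Setoid {p : Ideal T // p ∈ minimalPrimes T} where
  r p q := p = q ∨ (FieldAtPrime p.1 ∧ FieldAtPrime q.1 ∧
      ringKrullDim (T ⧸ p.1) = ringKrullDim (T ⧸ q.1))
  iseqv := by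
    constructor
    · exact fun x => Or.inl rfl
    · rintro x y (rfl | ⟨h1, h2, h3⟩)
      · exact Or.inl rfl
      · exact Or.inr ⟨h2, h1, h3.symm⟩
    · rintro x y z (rfl | ⟨h1, h2, h3⟩) h
      · exact h
      · rcases h with rfl | ⟨h4, h5, h6⟩
        · exact Or.inr ⟨h1, h2, h3⟩
        · exact Or.inr ⟨h1, h5, h3.trans h6⟩

/-- The equivalence relation `∼₂` on the minimal primes of `T`:
`p ∼₂ q` iff `dim(T/p) = dim(T/q)`. -/
def sim2 : Setoid {p : Ideal T // p ∈ minimalPrimes T} where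
  r p q := ringKrullDim (T ⧸ p.1) = ringKrullDim (T ⧸ q.1)
  iseqv := ⟨fun _ => rfl, Eq.symm, Eq.trans⟩

/-- `|d₁(T)|`, the number of equivalence classes of `Min(T)` under `∼₁`. -/
noncomputable def d1Card : ℕ := Nat.card (Quotient (sim1 T))

/-- `|d₂(T)|`, the number of equivalence classes of `Min(T)` under `∼₂`. -/
noncomputable def d2Card : ℕ := Nat.card (Quotient (sim2 T))

end MinimalPrimeInvariants

section Partitions

/-- A feasible partition `P = {C, {C_i}_{i=1}^n}` of a finite collection `C` of
incomparable non-maximal prime ideals of the local ring `(T, m)`: for every associated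
prime `r` of `T` there is some `q ∈ C` with `r ⊆ q`, and there is exactly one index `l`
such that every `q ∈ C` containing `r` lies in `C_l`. -/
structure FeasiblePartition (T : Type u) [CommRing T] [IsLocalRing T] (n : ℕ) where
  C : Set (Ideal T)
  part : Fin n → Set (Ideal T)
  finite : C.Finite
  primes : ∀ p ∈ C, p.IsPrime
  nonmaximal : ∀ p ∈ C, p ≠ IsLocalRing.maximalIdeal T
  incomparable : ∀ p ∈ C, ∀ q ∈ C, p ≠ q → ¬p ≤ q
  part_nonempty : ∀ i, (part i).Nonempty
  part_subset : ∀ i, part i ⊆ C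
  part_disjoint : ∀ i j, i ≠ j → Disjoint (part i) (part j)
  part_cover : ∀ p ∈ C, ∃ i, p ∈ part i
  feasible : ∀ r ∈ associatedPrimes T T,
    (∃ q ∈ C, r ≤ q) ∧ (∃! l, ∀ q ∈ C, r ≤ q → q ∈ part l)

variable {T : Type u} [CommRing T] [IsLocalRing T] {n : ℕ}

/-- An IP-subring (intersection-preserving subring) of `T` with respect to a
feasible partition `P`. -/
def IsIPSubring (P : FeasiblePartition T n) (R : Subring T) : Prop :=
  IsQuasiLocalSubring R ∧
  Infinite R ∧
  (∀ p ∈ P.C, ∀ q ∈ minimalPrimes T, q ≤ p → p.comap R.subtype = q.comap R.subtype) ∧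
  (∀ p ∈ P.C, ∀ p' ∈ P.C,
    ((∃ i, p ∈ P.part i ∧ p' ∈ P.part i) ↔ p.comap R.subtype = p'.comap R.subtype)) ∧
  (∀ p ∈ P.C, ∀ r : T, r ∈ R → r ∈ p → ∃ t : T, t * r = 0 ∧ t ∉ p)

/-- A CIP-subring is a countable IP-subring. -/
def IsCIPSubring (P : FeasiblePartition T n) (R : Subring T) : Prop :=
  IsIPSubring P R ∧ Countable R

end Partitions

section MinPartitions

/-- A partition `P = {C_1, …, C_n}` of `Min(T)` such that every class containing a
singular minimal prime is a singleton. -/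
structure MinPartition (T : Type u) [CommRing T] (n : ℕ) where
  part : Fin n → Set (Ideal T)
  part_nonempty : ∀ i, (part i).Nonempty
  part_subset : ∀ i, part i ⊆ minimalPrimes T
  part_disjoint : ∀ i j, i ≠ j → Disjoint (part i) (part j)
  part_cover : ∀ p ∈ minimalPrimes T, ∃ i, p ∈ part i
  singular_singleton : ∀ i, ∀ p ∈ part i, ¬NonsingularAt p → part i = {p}

variable {T : Type u} [CommRing T] [IsLocalRing T] {n : ℕ}

/-- A GIP-subring (generalized intersection-preserving subring) of `T` with respect to a
partition `P` of `Min(T)`. -/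
def IsGIPSubring (P : MinPartition T n) (S : Subring T) : Prop :=
  IsQuasiLocalSubring S ∧
  Infinite S ∧
  (∀ p ∈ minimalPrimes T, ∀ p' ∈ minimalPrimes T,
    (p.comap S.subtype = p'.comap S.subtype ↔ ∃ i, p ∈ P.part i ∧ p' ∈ P.part i)) ∧
  (∀ p ∈ minimalPrimes T, NonsingularAt p →
    ∀ a : T, a ∈ S → a ∈ p → ∃ t : T, t * a = 0 ∧ t ∉ p)

/-- A CGIP-subring is a countable GIP-subring. -/
def IsCGIPSubring (P : MinPartition T n) (S : Subring T) : Prop :=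
  IsGIPSubring P S ∧ Countable S

end MinPartitions

section Witness

/-- A countable excellent local ring whose completion (at its maximal ideal) is
isomorphic to `T`. -/
structure ExcellentCompletionWitness (T : Type u) [CommRing T] [IsLocalRing T] where
  A : Type u
  [commRing : CommRing A]
  [isLocal : IsLocalRing A]
  countable : Countable A
  excellent : IsExcellentLocalRing A
  completion : Nonempty (AdicCompletion (IsLocalRing.maximalIdeal A) A ≃+* T)

attribute [instance] ExcellentCompletionWitness.commRing ExcellentCompletionWitness.isLocal

/-- A countable local (Noetherian) ring whose completion (at its maximal ideal) is
isomorphic to `T`. -/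
structure LocalCompletionWitness (T : Type u) [CommRing T] [IsLocalRing T] where
  A : Type u
  [commRing : CommRing A]
  [isNoetherian : IsNoetherianRing A]
  [isLocal : IsLocalRing A]
  countable : Countable A
  completion : Nonempty (AdicCompletion (IsLocalRing.maximalIdeal A) A ≃+* T)

attribute [instance] LocalCompletionWitness.commRing LocalCompletionWitness.isNoetherian
  LocalCompletionWitness.isLocal

end Witness

namespace Statement12Aux
open IsLocalRing

section Part1

variable {T : Type u} [CommRing T] [IsNoetherianRing T] [IsLocalRing T]

/-- Krull-intersection closedness: ideals are closed in the `m`-adic topology. -/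
lemma ideal_closed (J : Ideal T) (hJ : J ≠ ⊤) (x : T)
    (hx : ∀ n : ℕ, x ∈ J + (maximalIdeal T) ^ n) : x ∈ J := by
  let mk := Ideal.Quotient.mk J
  have hsurj : Function.Surjective mk := Ideal.Quotient.mk_surjective
  have : Nontrivial (T ⧸ J) := Ideal.Quotient.nontrivial_iff.mpr hJ
  have hloc : IsLocalRing (T ⧸ J) := IsLocalRing.of_surjective' mk hsurj
  have hJm : J ≤ maximalIdeal T := IsLocalRing.le_maximalIdeal hJ
  set N : Ideal (T ⧸ J) := (maximalIdeal T).map mk with hN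
  have hNle : N ≤ maximalIdeal (T ⧸ J) := by
    rw [hN, Ideal.map_le_iff_le_comap]
    intro y hy
    simp only [Ideal.mem_comap]
    rw [IsLocalRing.mem_maximalIdeal, mem_nonunits_iff]
    intro hu
    rcases hu.exists_right_inv with ⟨b, hb⟩
    obtain ⟨z, rfl⟩ := hsurj b
    have : (1 : T) - y * z ∈ J := by
      rw [← Ideal.Quotient.eq_zero_iff_mem]
      simp only [map_sub, map_one, map_mul]
      rw [hb]; ring
    have h1 : (1 : T) ∈ maximalIdeal T := by
      have := add_mem (hJm this) (Ideal.mul_mem_right z _ hy)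
      simpa using this
    exact (IsLocalRing.maximalIdeal.isMaximal T).ne_top (Ideal.eq_top_of_isUnit_mem _ h1 isUnit_one)
  have hNne : N ≠ ⊤ := fun h => (IsLocalRing.maximalIdeal.isMaximal (T ⧸ J)).ne_top
    (top_le_iff.mp (h ▸ hNle))
  have hbot := Ideal.iInf_pow_eq_bot_of_isLocalRing N hNne
  have hxmem : mk x ∈ (⨅ n : ℕ, N ^ n) := by
    rw [Ideal.mem_iInf]
    intro n
    have := hx n
    rcases Submodule.mem_sup.mp this with ⟨a, ha, b, hb, rfl⟩
    have h1 : mk a = 0 := Ideal.Quotient.eq_zero_iff_mem.mpr ha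
    have h2 : mk b ∈ N ^ n := by
      rw [hN, ← Ideal.map_pow]
      exact Ideal.mem_map_of_mem mk hb
    rw [map_add, h1, zero_add]
    exact h2
  rw [hbot] at hxmem
  exact (Ideal.Quotient.eq_zero_iff_mem).mp hxmem

variable [IsAdicComplete (maximalIdeal T) T]

lemma exists_limit (f : ℕ → T)
    (hf : ∀ {a b : ℕ}, a ≤ b → f b - f a ∈ (maximalIdeal T) ^ a) :
    ∃ L : T, ∀ n, f n - L ∈ (maximalIdeal T) ^ n := by
  have hpre : IsPrecomplete (maximalIdeal T) T := inferInstance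
  have key : ∀ {a b : ℕ}, a ≤ b →
      f a ≡ f b [SMOD ((maximalIdeal T) ^ a • ⊤ : Submodule T T)] := by
    intro a b hab
    rw [Ideal.smul_eq_mul, Ideal.mul_top, SModEq.sub_mem]
    simpa using neg_mem (hf hab)
  obtain ⟨L, hL⟩ := hpre.prec (fun {a b} h => key h)
  refine ⟨L, fun n => ?_⟩
  have := hL n
  rw [Ideal.smul_eq_mul, Ideal.mul_top, SModEq.sub_mem] at this
  exact this

end Part1

section Sep
variable {T : Type u} [CommRing T] [IsNoetherianRing T] [IsLocalRing T]
variable [IsAdicComplete (maximalIdeal T) T]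

open Classical in
lemma exists_separating (p : Ideal T) (hp : p.IsPrime) (x : T)
    (hxm : x ∈ maximalIdeal T) (hxp : x ∉ p) :
    ∃ g : Set ℕ → T, ∀ A B : Set ℕ, A ≠ B → g A - g B ∉ p := by
  classical
  set m := maximalIdeal T with hm
  let f : Set ℕ → ℕ → T := fun A n => ∑ i ∈ Finset.range n, (if i ∈ A then x ^ i else 0)
  have hcauchy : ∀ A : Set ℕ, ∀ {a b : ℕ}, a ≤ b → f A b - f A a ∈ m ^ a := by
    intro A a b hab
    have : f A b - f A a = ∑ i ∈ Finset.Ico a b, (if i ∈ A then x ^ i else 0) := by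
      simp only [f, Finset.range_eq_Ico]
      rw [← Finset.sum_Ico_consecutive _ (Nat.zero_le a) hab]
      ring
    rw [this]
    refine Ideal.sum_mem _ fun i hi => ?_
    rcases Finset.mem_Ico.mp hi with ⟨hai, _⟩
    split
    · exact Ideal.pow_le_pow_right hai (Ideal.pow_mem_pow hxm i)
    · exact zero_mem _
  choose g hg using fun A => exists_limit (f A) (hcauchy A)
  refine ⟨g, fun A B hAB hD => ?_⟩
  have hex : ∃ i, ¬(i ∈ A ↔ i ∈ B) := by
    by_contra h
    push_neg at h
    exact hAB (Set.ext h)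
  set i₀ := Nat.find hex with hi₀
  have hi₀spec := Nat.find_spec hex
  set δ : ℕ → T := fun i => (if i ∈ A then (1:T) else 0) - (if i ∈ B then 1 else 0) with hδdef
  have hδsmall : ∀ i < i₀, δ i = 0 := by
    intro i hi
    have := Nat.find_min hex hi
    rw [not_not] at this
    simp only [hδdef]
    by_cases h : i ∈ A
    · rw [if_pos h, if_pos (this.mp h), sub_self]
    · rw [if_neg h, if_neg (fun hb => h (this.mpr hb)), sub_self]
  have hδ0 : δ i₀ = 1 ∨ δ i₀ = -1 := by
    simp only [hδdef]
    by_cases h : i₀ ∈ A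
    · have : i₀ ∉ B := fun hb => hi₀spec ⟨fun _ => hb, fun _ => h⟩
      rw [if_pos h, if_neg this]; left; ring
    · have : i₀ ∈ B := by
        by_contra hb
        exact hi₀spec ⟨fun ha => absurd ha h, fun hb' => absurd hb' hb⟩
      rw [if_neg h, if_pos this]; right; ring
  set J : Ideal T := Ideal.span {x ^ (i₀ + 1)} with hJ
  have hJne : J ≠ ⊤ := by
    rw [hJ, Ne, Ideal.span_singleton_eq_top]
    intro hu
    have hxpow : x ^ (i₀ + 1) ∈ m := by
      rw [pow_succ]
      exact Ideal.mul_mem_left m _ hxm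
    exact (IsLocalRing.maximalIdeal.isMaximal T).ne_top
      (Ideal.eq_top_of_isUnit_mem _ hxpow hu)
  have hmain : g A - g B - δ i₀ * x ^ i₀ ∈ J := by
    apply ideal_closed J hJne
    intro n
    set N := max n (i₀ + 1) with hN
    have hsum : f A N - f B N = ∑ i ∈ Finset.range N, δ i * x ^ i := by
      simp only [f, hδdef, ← Finset.sum_sub_distrib, sub_mul, ite_mul, one_mul, zero_mul]
    have hi₀N : i₀ ∈ Finset.range N := Finset.mem_range.mpr (lt_of_lt_of_le (Nat.lt_succ_self i₀) (le_max_right n (i₀+1)))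
    have hw : f A N - f B N - δ i₀ * x ^ i₀ ∈ J := by
      rw [hsum, ← Finset.sum_erase_add _ _ hi₀N, add_sub_cancel_right]
      refine Ideal.sum_mem _ fun i hi => ?_
      rcases Finset.mem_erase.mp hi with ⟨hne, _⟩
      rcases lt_or_gt_of_ne hne with h|h
      · rw [hδsmall i h, zero_mul]; exact zero_mem _
      · apply Ideal.mul_mem_left
        rw [hJ, Ideal.mem_span_singleton]
        exact ⟨x ^ (i - (i₀+1)), by rw [← pow_add]; congr 1; omega⟩
    have hu' : f A N - g A ∈ m ^ N := hg A N
    have hv' : f B N - g B ∈ m ^ N := hg B N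
    have hvu : (f B N - g B) - (f A N - g A) ∈ m ^ n :=
      Ideal.pow_le_pow_right (le_max_left n (i₀+1)) (sub_mem hv' hu')
    have hid : g A - g B - δ i₀ * x ^ i₀ =
        (f A N - f B N - δ i₀ * x ^ i₀) + ((f B N - g B) - (f A N - g A)) := by ring
    rw [hid]
    exact Submodule.add_mem_sup hw hvu
  rw [hJ, Ideal.mem_span_singleton] at hmain
  obtain ⟨t, ht⟩ := (dvd_iff_exists_eq_mul_left.mp hmain)
  have hfac : x ^ i₀ * (δ i₀ + x * t) ∈ p := by
    have hid : x ^ i₀ * (δ i₀ + x * t) = g A - g B := by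
      have ht' : g A - g B - δ i₀ * x ^ i₀ = t * x ^ (i₀ + 1) := ht
      linear_combination -ht'
    rw [hid]; exact hD
  rcases hp.mem_or_mem hfac with h|h
  · exact hxp (hp.mem_of_pow_mem _ h)
  · have hpm : p ≤ m := IsLocalRing.le_maximalIdeal hp.ne_top
    have hxt : x * t ∈ m := Ideal.mul_mem_right t _ hxm
    have h1m : δ i₀ ∈ m := by
      have h2 := hpm h
      have := sub_mem h2 hxt
      simpa using this
    have hone : (1:T) ∈ m := by
      rcases hδ0 with h'|h'
      · rwa [h'] at h1m
      · rw [h'] at h1m; simpa using neg_mem h1m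
    exact (IsLocalRing.maximalIdeal.isMaximal T).ne_top
      (Ideal.eq_top_of_isUnit_mem _ hone isUnit_one)

end Sep


section Part2
open IsLocalRing
variable {T : Type u} [CommRing T] [IsLocalRing T]

lemma prime_eq_of_le_minimal {p q : Ideal T} (hp : p ∈ minimalPrimes T)
    (hq : q.IsPrime) (hle : q ≤ p) : q = p :=
  le_antisymm hle (hp.2 ⟨hq, bot_le⟩ hle)

lemma maximal_not_minimal (hdim : 1 ≤ ringKrullDim T) :
    maximalIdeal T ∉ minimalPrimes T := by
  intro hmem
  have hsub : Subsingleton (PrimeSpectrum T) := by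
    constructor
    intro a b
    have ha : a.asIdeal = maximalIdeal T :=
      prime_eq_of_le_minimal hmem a.isPrime (le_maximalIdeal a.isPrime.ne_top)
    have hb : b.asIdeal = maximalIdeal T :=
      prime_eq_of_le_minimal hmem b.isPrime (le_maximalIdeal b.isPrime.ne_top)
    exact PrimeSpectrum.ext (ha.trans hb.symm)
  have := Order.krullDim_nonpos_of_subsingleton (α := PrimeSpectrum T)
  rw [ringKrullDim] at hdim
  exact absurd (le_trans hdim this) (by norm_num)

lemma exists_mem_maximal_not_mem (hdim : 1 ≤ ringKrullDim T)
    {p : Ideal T} (hp : p ∈ minimalPrimes T) :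
    ∃ x, x ∈ maximalIdeal T ∧ x ∉ p := by
  have hprime : p.IsPrime := hp.1.1
  have hle : p ≤ maximalIdeal T := le_maximalIdeal hprime.ne_top
  have hne : p ≠ maximalIdeal T := fun h => maximal_not_minimal hdim (h ▸ hp)
  obtain ⟨x, hx1, hx2⟩ := SetLike.exists_of_lt (lt_of_le_of_ne hle hne)
  exact ⟨x, hx1, hx2⟩

/-- For a nonsingular minimal prime, every element of `p` is `p`-torsion. -/
lemma nonsingular_minimal_torsion {p : Ideal T} (hp : p ∈ minimalPrimes T)
    (hns : NonsingularAt p) {a : T} (ha : a ∈ p) :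
    ∃ u : T, u * a = 0 ∧ u ∉ p := by
  obtain ⟨hprime, hreg⟩ := hns
  haveI := hprime
  obtain ⟨hloc, _, s, hspan, hcard⟩ := hreg
  -- the localization has a unique prime, so Krull dimension 0
  have hsub : Subsingleton (PrimeSpectrum (Localization.AtPrime p)) := by
    constructor
    intro a' b'
    let e := IsLocalization.AtPrime.orderIsoOfPrime (Localization.AtPrime p) p
    have key : ∀ (P Q : Ideal (Localization.AtPrime p)) (hP : P.IsPrime) (hQ : Q.IsPrime),
        P = Q := by
      intro P Q hP hQ
      have h1 := (e ⟨P, hP⟩).2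
      have h2 := (e ⟨Q, hQ⟩).2
      have heq : (e ⟨P, hP⟩ : Ideal T) = (e ⟨Q, hQ⟩ : Ideal T) := by
        rw [prime_eq_of_le_minimal hp h1.1 h1.2, prime_eq_of_le_minimal hp h2.1 h2.2]
      have := e.injective (Subtype.ext heq)
      exact congrArg Subtype.val this
    exact PrimeSpectrum.ext (key _ _ a'.isPrime b'.isPrime)
  have hdim0 : ringKrullDim (Localization.AtPrime p) = 0 := by
    refine le_antisymm (Order.krullDim_nonpos_of_subsingleton) ?_
    have : Nonempty (PrimeSpectrum (Localization.AtPrime p)) := inferInstance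
    exact Order.krullDim_nonneg
  rw [hdim0] at hcard
  have hs0 : s.card = 0 := by
    have : ((s.card : ℕ) : WithBot (WithTop ℕ)) = ((0 : ℕ) : WithBot (WithTop ℕ)) := by
      rw [hcard, Nat.cast_zero]; rfl
    exact_mod_cast this
  have hsempty : s = ∅ := Finset.card_eq_zero.mp hs0
  rw [hsempty] at hspan
  simp only [Finset.coe_empty, Ideal.span_empty] at hspan
  have hmap0 : algebraMap T (Localization.AtPrime p) a = 0 := by
    have := (IsLocalization.AtPrime.to_map_mem_maximal_iff (Localization.AtPrime p) p a).mpr ha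
    rw [← hspan] at this
    simpa using this
  rw [IsLocalization.map_eq_zero_iff p.primeCompl] at hmap0
  obtain ⟨u, hu⟩ := hmap0
  exact ⟨u, hu, u.2⟩

end Part2


section Part3
variable {T : Type u} [CommRing T] [IsLocalRing T]

lemma one_not_mem_max : (1 : T) ∉ maximalIdeal T :=
  fun h => (maximalIdeal.isMaximal T).ne_top (Ideal.eq_top_of_isUnit_mem _ h isUnit_one)

lemma max_isPrime : (maximalIdeal T).IsPrime := (maximalIdeal.isMaximal T).isPrime

/-- The "localization" of a subring `A` inside the local ring `T`: all `a/b` with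
`a, b ∈ A` and `b` a unit of `T`. -/
def locSub (A : Subring T) : Subring T where
  carrier := {x | ∃ a ∈ A, ∃ b ∈ A, b ∉ maximalIdeal T ∧ x * b = a}
  one_mem' := ⟨1, A.one_mem, 1, A.one_mem, one_not_mem_max, mul_one 1⟩
  zero_mem' := ⟨0, A.zero_mem, 1, A.one_mem, one_not_mem_max, by ring⟩
  mul_mem' := by
    rintro x y ⟨a₁, ha₁, b₁, hb₁, hbm₁, hx⟩ ⟨a₂, ha₂, b₂, hb₂, hbm₂, hy⟩
    refine ⟨a₁ * a₂, A.mul_mem ha₁ ha₂, b₁ * b₂, A.mul_mem hb₁ hb₂, ?_, ?_⟩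
    · intro h
      rcases max_isPrime.mem_or_mem h with h|h
      exacts [hbm₁ h, hbm₂ h]
    · linear_combination y * b₂ * hx + a₁ * hy
  add_mem' := by
    rintro x y ⟨a₁, ha₁, b₁, hb₁, hbm₁, hx⟩ ⟨a₂, ha₂, b₂, hb₂, hbm₂, hy⟩
    refine ⟨a₁ * b₂ + a₂ * b₁, A.add_mem (A.mul_mem ha₁ hb₂) (A.mul_mem ha₂ hb₁),
      b₁ * b₂, A.mul_mem hb₁ hb₂, ?_, ?_⟩
    · intro h
      rcases max_isPrime.mem_or_mem h with h|h
      exacts [hbm₁ h, hbm₂ h]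
    · linear_combination b₂ * hx + b₁ * hy
  neg_mem' := by
    rintro x ⟨a, ha, b, hb, hbm, hx⟩
    exact ⟨-a, A.neg_mem ha, b, hb, hbm, by linear_combination -hx⟩

lemma le_locSub (A : Subring T) : A ≤ locSub A :=
  fun x hx => ⟨x, hx, 1, A.one_mem, one_not_mem_max, mul_one x⟩

lemma locSub_unit (A : Subring T) (x : ↥(locSub A)) (hx : (x : T) ∉ maximalIdeal T) :
    IsUnit x := by
  obtain ⟨a, ha, b, hb, hbm, hxb⟩ := x.2
  have ham : a ∉ maximalIdeal T := by
    intro h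
    rw [← hxb] at h
    rcases max_isPrime.mem_or_mem h with h|h
    exacts [hx h, hbm h]
  have hua : IsUnit a := by
    by_contra h
    exact ham ((IsLocalRing.mem_maximalIdeal a).mpr h)
  obtain ⟨ua, hua'⟩ := hua
  have hy : (b * ↑ua⁻¹) * a = b := by
    have : (↑ua⁻¹ : T) * a = 1 := by rw [← hua']; exact ua.inv_mul
    calc (b * ↑ua⁻¹) * a = b * ((↑ua⁻¹ : T) * a) := by ring
    _ = b := by rw [this, mul_one]
  have hymem : (b * ↑ua⁻¹ : T) ∈ locSub A := ⟨b, hb, a, ha, ham, hy⟩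
  refine isUnit_iff_exists_inv.mpr ⟨⟨_, hymem⟩, Subtype.ext ?_⟩
  show (x : T) * (b * ↑ua⁻¹) = 1
  have : a * (↑ua⁻¹ : T) = 1 := by rw [← hua']; exact ua.mul_inv
  calc (x : T) * (b * ↑ua⁻¹) = ((x : T) * b) * ↑ua⁻¹ := by ring
  _ = a * ↑ua⁻¹ := by rw [hxb]
  _ = 1 := this

lemma locSub_isLocalRing (A : Subring T) : IsLocalRing ↥(locSub A) := by
  haveI : Nontrivial ↥(locSub A) :=
    ⟨⟨0, 1, fun h => zero_ne_one (congrArg Subtype.val h)⟩⟩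
  refine IsLocalRing.of_isUnit_or_isUnit_one_sub_self fun x => ?_
  by_cases h : (x : T) ∈ maximalIdeal T
  · right
    refine locSub_unit A _ ?_
    intro h1
    have : ((1 : ↥(locSub A)) - x : ↥(locSub A)) = 1 - x := rfl
    have h1' : (1 : T) - (x : T) ∈ maximalIdeal T := h1
    have := add_mem h1' h
    simp only [sub_add_cancel] at this
    exact one_not_mem_max this
  · exact Or.inl (locSub_unit A x h)

lemma locSub_not_unit (A : Subring T) (x : ↥(locSub A)) (hx : (x : T) ∈ maximalIdeal T) :
    ¬IsUnit x := by
  intro hu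
  obtain ⟨y, hxy⟩ := isUnit_iff_exists_inv.mp hu
  have : (x : T) * (y : T) = 1 := congrArg Subtype.val hxy
  exact one_not_mem_max (this ▸ Ideal.mul_mem_right _ _ hx)

lemma locSub_maximalIdeal (A : Subring T) :
    @maximalIdeal ↥(locSub A) _ (locSub_isLocalRing A)
      = (maximalIdeal T).comap (locSub A).subtype := by
  haveI := locSub_isLocalRing A
  ext x
  rw [IsLocalRing.mem_maximalIdeal, mem_nonunits_iff, Ideal.mem_comap]
  constructor
  · intro h
    by_contra hm
    exact h (locSub_unit A x hm)
  · exact locSub_not_unit A x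

lemma locSub_countable (A : Subring T) [Countable ↥A] : Countable ↥(locSub A) := by
  have hwit : ∀ x : ↥(locSub A), ∃ ab : ↥A × ↥A,
      ((ab.2 : T) ∉ maximalIdeal T) ∧ (x : T) * ab.2 = ab.1 := by
    rintro ⟨x, a, ha, b, hb, hbm, hx⟩
    exact ⟨(⟨a, ha⟩, ⟨b, hb⟩), hbm, hx⟩
  choose F hF1 hF2 using hwit
  have hinj : Function.Injective F := by
    intro x y hxy
    have h1 := hF2 x
    have h2 := hF2 y
    rw [hxy] at h1
    have hb : IsUnit ((F y).2 : T) := by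
      by_contra h
      exact hF1 y ((IsLocalRing.mem_maximalIdeal _).mpr h)
    apply Subtype.ext
    have := h1.trans h2.symm
    exact hb.mul_left_injective this
  exact hinj.countable

end Part3


lemma countable_polynomial (S : Type v) [CommRing S] [Countable S] : Countable (Polynomial S) := by
  haveI : Countable (AddMonoidAlgebra S ℕ) := Function.Injective.countable (f := fun x : AddMonoidAlgebra S ℕ => x.coeff)
    (fun a b h => by cases a; cases b; simpa using h)
  have : Function.Injective (Polynomial.toFinsupp (R := S)) := fun a b h => by
    cases a; cases b; simpa using h
  exact this.countable

section Part4
variable {T : Type u} [CommRing T] [IsLocalRing T]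

/-- `t` is "transcendental mod `p`" over the subring `S`:
any `S`-polynomial relation on `t` mod `p` has all coefficients in `p`. -/
def GoodAt (S : Subring T) (p : Ideal T) (t : T) : Prop :=
  ∀ f : Polynomial ↥S, Polynomial.eval₂ S.subtype t f ∈ p →
    ∀ e, ((f.coeff e : ↥S) : T) ∈ p

lemma eval₂_mk (S : Subring T) (p : Ideal T) (t : T) (f : Polynomial ↥S) :
    Ideal.Quotient.mk p (Polynomial.eval₂ S.subtype t f)
      = Polynomial.eval₂ ((Ideal.Quotient.mk p).comp S.subtype)
          (Ideal.Quotient.mk p t) f :=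
  Polynomial.hom_eval₂ f S.subtype (Ideal.Quotient.mk p) t

lemma goodAt_congr (S : Subring T) (p : Ideal T) {t t' : T} (h : t - t' ∈ p)
    (hg : GoodAt S p t) : GoodAt S p t' := by
  intro f hf e
  refine hg f ?_ e
  have hmk : Ideal.Quotient.mk p t = Ideal.Quotient.mk p t' :=
    Ideal.Quotient.mk_eq_mk_iff_sub_mem t t' |>.mpr h
  have h1 : Ideal.Quotient.mk p (Polynomial.eval₂ S.subtype t f)
      = Ideal.Quotient.mk p (Polynomial.eval₂ S.subtype t' f) := by
    rw [eval₂_mk, eval₂_mk, hmk]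
  have h2 := Ideal.Quotient.mk_eq_mk_iff_sub_mem _ _ |>.mp h1
  have := p.add_mem h2 hf
  simpa using this

lemma trans_avoid (S : Subring T) [Countable ↥S] (p : Ideal T) (hp : p.IsPrime)
    (g : Set ℕ → T) (hg : ∀ A B : Set ℕ, A ≠ B → g A - g B ∉ p)
    (u : T) (hu : u ∉ p) (t₁ : T) :
    ∃ lam : T, GoodAt S p (t₁ + lam * u) := by
  classical
  haveI := hp
  haveI : Countable (Polynomial ↥S) := countable_polynomial _
  by_contra hcon
  push_neg at hcon
  set mk := Ideal.Quotient.mk p with hmkdef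
  set φ : ↥S →+* T ⧸ p := mk.comp S.subtype with hφ
  set Bad : Set (T ⧸ p) := {β | ∃ f : Polynomial ↥S, f.map φ ≠ 0 ∧ (f.map φ).eval β = 0}
    with hBad
  have hBadC : Bad.Countable := by
    have hsub : Bad ⊆ ⋃ f : Polynomial ↥S, {β | f.map φ ≠ 0 ∧ (f.map φ).eval β = 0} := by
      rintro β ⟨f, h1, h2⟩
      exact Set.mem_iUnion.mpr ⟨f, h1, h2⟩
    refine Set.Countable.mono hsub (Set.countable_iUnion fun f => ?_)
    by_cases h : f.map φ = 0
    · have : {β : T ⧸ p | f.map φ ≠ 0 ∧ (f.map φ).eval β = 0} = ∅ := by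
        ext β; simp [h]
      rw [this]; exact Set.countable_empty
    · exact ((Polynomial.finite_setOf_isRoot h).subset (fun β hβ => hβ.2)).countable
  set Φ : Set ℕ → T ⧸ p := fun A => mk t₁ + mk (g A) * mk u with hΦ
  have hΦinj : Function.Injective Φ := by
    intro A B h
    by_contra hne
    have h0 : mk (g A - g B) * mk u = 0 := by
      rw [map_sub]
      simp only [hΦ] at h
      linear_combination h
    rcases mul_eq_zero.mp h0 with h' | h'
    · exact hg A B hne (Ideal.Quotient.eq_zero_iff_mem.mp h')
    · exact hu (Ideal.Quotient.eq_zero_iff_mem.mp h')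
  have hmaps : ∀ A, Φ A ∈ Bad := by
    intro A
    have hbad := hcon (g A)
    simp only [GoodAt] at hbad
    push_neg at hbad
    obtain ⟨f, hf, e, he⟩ := hbad
    refine ⟨f, ?_, ?_⟩
    · intro h0
      have : φ (f.coeff e) = 0 := by rw [← Polynomial.coeff_map, h0]; simp
      exact he (Ideal.Quotient.eq_zero_iff_mem.mp this)
    · have h1 : (f.map φ).eval (Φ A) = Polynomial.eval₂ φ (Φ A) f :=
        Polynomial.eval_map φ _
      have h2 : Φ A = mk (t₁ + g A * u) := by
        simp only [hΦ, map_add, map_mul]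
      rw [h1, h2, hφ, ← eval₂_mk]
      exact Ideal.Quotient.eq_zero_iff_mem.mpr hf
  have hcnt : Countable (Set ℕ) := by
    haveI : Countable ↥Bad := hBadC.to_subtype
    exact Function.Injective.countable
      (f := fun A : Set ℕ => (⟨Φ A, hmaps A⟩ : ↥Bad))
      (fun A B h => hΦinj (congrArg Subtype.val h))
  obtain ⟨f, hf⟩ := Countable.exists_injective_nat (Set ℕ)
  exact Function.cantor_injective f hf

end Part4

section Part5
variable {T : Type u} [CommRing T] [IsNoetherianRing T] [IsLocalRing T]
variable [IsAdicComplete (maximalIdeal T) T] {n : ℕ}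

/-- Key step: given a CGIP-subring `S`, elements `s₁, c` of `S` and a set `Ls ⊆ S`,
and `t₁ ∈ T` with `c - s₁ t₁ ∈ (Ls)T`, there is a larger CGIP-subring `R₁` containing an
element `t'` with `c - s₁ t' ∈ (Ls)T`. -/
lemma step (hdim : 1 ≤ ringKrullDim T) (P : MinPartition T n) (S : Subring T)
    (hS : IsCGIPSubring P S) (s₁ : T) (hs₁ : s₁ ∈ S) (c : T) (hc : c ∈ S)
    (Ls : Set T) (hLs : ∀ x ∈ Ls, x ∈ S) (t₁ : T)
    (hct : c - s₁ * t₁ ∈ Ideal.span Ls) :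
    ∃ (R₁ : Subring T) (t' : T), S ≤ R₁ ∧ IsCGIPSubring P R₁ ∧ t' ∈ R₁ ∧
      c - s₁ * t' ∈ Ideal.span Ls := by
  classical
  obtain ⟨⟨hql, hinf, hcond2, _hcond3⟩, hcnt⟩ := hS
  haveI : Infinite ↥S := hinf
  haveI : Countable ↥S := hcnt
  -- the annihilator of s₁
  set Ann : Ideal T :=
    { carrier := {t | t * s₁ = 0}
      add_mem' := fun {a b} ha hb => by
        simp only [Set.mem_setOf_eq] at *
        rw [add_mul, ha, hb, add_zero]
      zero_mem' := by simp
      smul_mem' := fun r a ha => by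
        simp only [smul_eq_mul, Set.mem_setOf_eq] at *
        rw [mul_assoc, ha, mul_zero] } with hAnnDef
  have hAnnMem : ∀ t : T, t ∈ Ann ↔ t * s₁ = 0 := fun t => Iff.rfl
  set K : Ideal T := Ideal.span Ls ⊔ Ann with hKdef
  -- the "bad" primes, where we need transcendence
  set multi : Set (Ideal T) := {p | ∃ i p', p ∈ P.part i ∧ p' ∈ P.part i ∧ p' ≠ p}
    with hmultiDef
  set B' : Set (Ideal T) := {p | p ∈ minimalPrimes T ∧ p ∈ multi ∧ ¬K ≤ p} with hB'def
  have hBfin : B'.Finite :=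
    (minimalPrimes.finite_of_isNoetherianRing T).subset (fun p hp => hp.1)
  set Bf : Finset (Ideal T) := hBfin.toFinset with hBfdef
  have hBfmem : ∀ p, p ∈ Bf ↔ (p ∈ minimalPrimes T ∧ p ∈ multi ∧ ¬K ≤ p) := by
    intro p; rw [hBfdef, Set.Finite.mem_toFinset]; rfl
  have hBfprime : ∀ p ∈ Bf, p.IsPrime := fun p hp => ((hBfmem p).mp hp).1.1.1
  -- choice functions
  set kf : Ideal T → T := fun p => if h : ∃ x, x ∈ K ∧ x ∉ p then h.choose else 0
    with hkfdef
  have hkf : ∀ p ∈ Bf, kf p ∈ K ∧ kf p ∉ p := by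
    intro p hp
    have h : ∃ x, x ∈ K ∧ x ∉ p := by
      obtain ⟨x, hx1, hx2⟩ := SetLike.not_le_iff_exists.mp ((hBfmem p).mp hp).2.2
      exact ⟨x, hx1, hx2⟩
    rw [hkfdef]; simp only [dif_pos h]; exact h.choose_spec
  set zf : Ideal T → Ideal T → T := fun q p => if h : ∃ x, x ∈ q ∧ x ∉ p then h.choose else 0
    with hzfdef
  have hzf : ∀ p ∈ Bf, ∀ q ∈ Bf, q ≠ p → zf q p ∈ q ∧ zf q p ∉ p := by
    intro p hp q hq hne
    have h : ∃ x, x ∈ q ∧ x ∉ p := by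
      have hqlep : ¬q ≤ p := fun hle =>
        hne (prime_eq_of_le_minimal ((hBfmem p).mp hp).1 (hBfprime q hq) hle)
      obtain ⟨x, hx1, hx2⟩ := SetLike.not_le_iff_exists.mp hqlep
      exact ⟨x, hx1, hx2⟩
    rw [hzfdef]; simp only [dif_pos h]; exact h.choose_spec
  -- the elements u p ∈ K, u p ∉ p, u p ∈ q for q ≠ p in Bf
  set uf : Ideal T → T := fun p => kf p * ∏ q ∈ Bf.erase p, zf q p with hufdef
  have hufK : ∀ p ∈ Bf, uf p ∈ K := fun p hp =>
    Ideal.mul_mem_right _ _ (hkf p hp).1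
  have hufp : ∀ p ∈ Bf, uf p ∉ p := by
    intro p hp hmem
    haveI := hBfprime p hp
    rcases (hBfprime p hp).mem_or_mem hmem with h | h
    · exact (hkf p hp).2 h
    · obtain ⟨q, hq, hzq⟩ := Ideal.IsPrime.prod_mem_iff.mp h
      rcases Finset.mem_erase.mp hq with ⟨hqne, hqBf⟩
      exact (hzf p hp q hqBf hqne).2 hzq
  have hufq : ∀ p ∈ Bf, ∀ q ∈ Bf, q ≠ p → uf p ∈ q := by
    intro p hp q hq hne
    have hmemq : zf q p ∈ q := (hzf p hp q hq hne).1
    have hdvd : zf q p ∣ ∏ r ∈ Bf.erase p, zf r p :=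
      Finset.dvd_prod_of_mem _ (Finset.mem_erase.mpr ⟨hne, hq⟩)
    obtain ⟨w, hw⟩ := hdvd
    rw [hufdef]
    simp only
    rw [hw, ← mul_assoc, mul_comm (kf p), mul_assoc]
    exact Ideal.mul_mem_right _ _ hmemq
  -- the transcendental shifts
  set lamf : Ideal T → T := fun p =>
    if h : ∃ lam, GoodAt S p (t₁ + lam * uf p) then h.choose else 0 with hlamfdef
  have hlamf : ∀ p ∈ Bf, GoodAt S p (t₁ + lamf p * uf p) := by
    intro p hp
    haveI hpr := hBfprime p hp
    obtain ⟨x, hx1, hx2⟩ := exists_mem_maximal_not_mem hdim ((hBfmem p).mp hp).1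
    obtain ⟨g, hg⟩ := exists_separating p hpr x hx1 hx2
    have h : ∃ lam, GoodAt S p (t₁ + lam * uf p) :=
      trans_avoid S p hpr g hg (uf p) (hufp p hp) t₁
    rw [hlamfdef]; simp only [dif_pos h]; exact h.choose_spec
  set y : T := ∑ p ∈ Bf, lamf p * uf p with hydef
  set t' : T := t₁ + y with ht'def
  have hGood : ∀ p ∈ Bf, GoodAt S p t' := by
    intro p hp
    refine goodAt_congr S p ?_ (hlamf p hp)
    have hsum : y = (∑ q ∈ Bf.erase p, lamf q * uf q) + lamf p * uf p :=
      (Finset.sum_erase_add _ _ hp).symm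
    have hrest : (∑ q ∈ Bf.erase p, lamf q * uf q) ∈ p := by
      refine Ideal.sum_mem _ fun q hq => ?_
      rcases Finset.mem_erase.mp hq with ⟨hqne, hqBf⟩
      exact Ideal.mul_mem_left _ _ (hufq q hqBf p hp (Ne.symm hqne))
    have : t₁ + lamf p * uf p - t' = -(∑ q ∈ Bf.erase p, lamf q * uf q) := by
      rw [ht'def, hsum]; ring
    rw [this]
    exact neg_mem hrest
  have hyK : y ∈ K := Ideal.sum_mem _ fun p hp => Ideal.mul_mem_left _ _ (hufK p hp)
  have hs₁y : s₁ * y ∈ Ideal.span Ls := by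
    rw [hKdef] at hyK
    obtain ⟨z, hz, w, hw, hzw⟩ := Submodule.mem_sup.mp hyK
    have hws : w * s₁ = 0 := hw
    have heq : s₁ * y = s₁ * z := by
      rw [← hzw]
      have h0 : s₁ * w = 0 := by rw [mul_comm]; exact hws
      rw [mul_add, h0, add_zero]
    rw [heq]
    exact Ideal.mul_mem_left _ _ hz
  have hct' : c - s₁ * t' ∈ Ideal.span Ls := by
    have : c - s₁ * t' = (c - s₁ * t₁) - s₁ * y := by rw [ht'def]; ring
    rw [this]
    exact sub_mem hct hs₁y
  -- the adjoined subring and its localization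
  set evT : Polynomial ↥S →+* T := Polynomial.eval₂RingHom S.subtype t' with hevTdef
  have hevT : ∀ f, evT f = Polynomial.eval₂ S.subtype t' f := fun f => rfl
  set A : Subring T := evT.range with hAdef
  have hSA : S ≤ A := by
    intro s hs
    exact ⟨Polynomial.C ⟨s, hs⟩, by rw [hevT, Polynomial.eval₂_C]; rfl⟩
  have htA : t' ∈ A := ⟨Polynomial.X, by rw [hevT, Polynomial.eval₂_X]⟩
  set R₁ : Subring T := locSub A with hR₁def
  have hSR : S ≤ R₁ := le_trans hSA (le_locSub A)
  haveI hAcnt : Countable ↥A := by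
    haveI : Countable (Polynomial ↥S) := countable_polynomial _
    have h1 : (A : Set T).Countable := by
      rw [hAdef, RingHom.coe_range]
      exact Set.countable_range _
    exact h1.to_subtype
  haveI hR₁cnt : Countable ↥R₁ := locSub_countable A
  -- the main comparison: elements of A lying in one prime of a shared class lie in all
  have main : ∀ p p', p ∈ minimalPrimes T → p' ∈ minimalPrimes T →
      (∃ i, p ∈ P.part i ∧ p' ∈ P.part i) → p ≠ p' →
      ∀ a ∈ A, a ∈ p → a ∈ p' := by
    rintro p p' hpmin hp'min ⟨i, hpi, hp'i⟩ hne a haA hap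
    have hprime : p.IsPrime := hpmin.1.1
    have hprime' : p'.IsPrime := hp'min.1.1
    have hns : NonsingularAt p := by
      by_contra hn
      have := P.singular_singleton i p hpi hn
      rw [this] at hp'i
      exact hne (Set.mem_singleton_iff.mp hp'i).symm
    have hSS : ∀ s ∈ S, (s ∈ p ↔ s ∈ p') := by
      have heq : p.comap S.subtype = p'.comap S.subtype :=
        (hcond2 p hpmin p' hp'min).mpr ⟨i, hpi, hp'i⟩
      intro s hs
      have h1 : (⟨s, hs⟩ : ↥S) ∈ p.comap S.subtype ↔ (⟨s, hs⟩ : ↥S) ∈ p'.comap S.subtype := by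
        rw [heq]
      exact h1
    obtain ⟨f, rfl⟩ := haA
    by_cases hK : K ≤ p
    · -- pivot case: s₁ ∉ p, Ls ⊆ p
      have hs₁p : s₁ ∉ p := by
        intro hmem
        obtain ⟨u0, hu0, hu0p⟩ := nonsingular_minimal_torsion hpmin hns hmem
        have : u0 ∈ K := le_sup_right (a := Ideal.span Ls) hu0
        exact hu0p (hK this)
      have hs₁p' : s₁ ∉ p' := fun h => hs₁p ((hSS s₁ hs₁).mpr h)
      have hLp : Ideal.span Ls ≤ p := le_trans le_sup_left hK
      have hLp' : Ideal.span Ls ≤ p' := Ideal.span_le.mpr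
        (fun x hx => (hSS x (hLs x hx)).mp (hLp (Ideal.subset_span hx)))
      set d := f.natDegree with hd
      set G : T := ∑ e ∈ f.support, ((f.coeff e : ↥S) : T) * s₁ ^ (d - e) * c ^ e
        with hGdef
      have hGS : G ∈ S := by
        refine Subring.sum_mem S fun e _ => ?_
        exact S.mul_mem (S.mul_mem (f.coeff e).2 (Subring.pow_mem S hs₁ _))
          (Subring.pow_mem S hc _)
      have hdelta : s₁ ^ d * evT f - G ∈ Ideal.span Ls := by
        set mkJ := Ideal.Quotient.mk (Ideal.span Ls) with hmkJ
        have hcc : mkJ (s₁ * t') = mkJ c :=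
          (Ideal.Quotient.mk_eq_mk_iff_sub_mem _ _).mpr (by simpa using neg_mem hct')
        have hmain : mkJ (s₁ ^ d * evT f) = mkJ G := by
          rw [hevT, Polynomial.eval₂_eq_sum, Polynomial.sum_def, hGdef]
          simp only [map_mul, map_sum, map_pow, Finset.mul_sum]
          refine Finset.sum_congr rfl fun e he => ?_
          have hed : e ≤ d := Polynomial.le_natDegree_of_mem_supp e he
          have hsplit : mkJ s₁ ^ d = mkJ s₁ ^ (d - e) * mkJ s₁ ^ e := by
            rw [← pow_add, Nat.sub_add_cancel hed]
          have hstep : (mkJ s₁ * mkJ t') ^ e = mkJ c ^ e := by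
            rw [← map_mul, hcc]
          calc mkJ s₁ ^ d * (mkJ (S.subtype (f.coeff e)) * mkJ t' ^ e)
              = mkJ (S.subtype (f.coeff e)) * mkJ s₁ ^ (d - e) *
                ((mkJ s₁ * mkJ t') ^ e) := by rw [hsplit, mul_pow]; ring
            _ = mkJ ((f.coeff e : ↥S) : T) * mkJ s₁ ^ (d - e) * mkJ c ^ e := by
                rw [hstep]; rfl
            _ = mkJ (((f.coeff e : ↥S) : T) * s₁ ^ (d - e) * c ^ e) := by
                simp only [map_mul, map_pow]
        exact (Ideal.Quotient.mk_eq_mk_iff_sub_mem _ _).mp hmain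
      have h1 : G ∈ p := by
        have hm1 : s₁ ^ d * evT f ∈ p := Ideal.mul_mem_left _ _ hap
        have := p.sub_mem hm1 (hLp hdelta)
        simpa using this
      have h2 : G ∈ p' := (hSS G hGS).mp h1
      have h3 : s₁ ^ d * evT f ∈ p' := by
        have := p'.add_mem (hLp' hdelta) h2
        simpa using this
      exact (hprime'.mem_or_mem h3).resolve_left
        (fun h => hs₁p' (hprime'.mem_of_pow_mem _ h))
    · -- transcendence case
      have hpB : p ∈ Bf := (hBfmem p).mpr ⟨hpmin, ⟨i, p', hpi, hp'i, Ne.symm hne⟩, hK⟩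
      have hcoef := hGood p hpB f (by rw [← hevT]; exact hap)
      rw [hevT, Polynomial.eval₂_eq_sum, Polynomial.sum_def]
      refine Ideal.sum_mem _ fun e _ => ?_
      exact Ideal.mul_mem_right _ _ ((hSS _ (f.coeff e).2).mp (hcoef e))
  refine ⟨R₁, t', hSR, ?_, le_locSub A htA, hct'⟩
  refine ⟨⟨⟨locSub_isLocalRing A, locSub_maximalIdeal A⟩, ?_, ?_, ?_⟩, hR₁cnt⟩
  · exact Infinite.of_injective (Subring.inclusion hSR)
      (fun a b h => Subtype.ext (congrArg (fun z : ↥R₁ => z.1) h))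
  · intro p hp p' hp'
    constructor
    · intro hcomap
      have hcS : p.comap S.subtype = p'.comap S.subtype := by
        ext s
        simp only [Ideal.mem_comap]
        have h1 : (⟨(s : T), hSR s.2⟩ : ↥R₁) ∈ p.comap R₁.subtype ↔
            (⟨(s : T), hSR s.2⟩ : ↥R₁) ∈ p'.comap R₁.subtype := by rw [hcomap]
        exact h1
      exact (hcond2 p hp p' hp').mp hcS
    · rintro ⟨i, hpi, hp'i⟩
      by_cases hpp' : p = p'
      · rw [hpp']
      · have hprime : p.IsPrime := hp.1.1
        have hprime' : p'.IsPrime := hp'.1.1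
        ext x
        obtain ⟨x, hx⟩ := x
        obtain ⟨a, haA, b, hbA, hbm, hxb⟩ := hx
        simp only [Ideal.mem_comap]
        have hgoal : (x ∈ p ↔ x ∈ p') → ((R₁.subtype ⟨x, ⟨a, haA, b, hbA, hbm, hxb⟩⟩ : T) ∈ p ↔
            (R₁.subtype ⟨x, ⟨a, haA, b, hbA, hbm, hxb⟩⟩ : T) ∈ p') := fun h => h
        apply hgoal
        have hbp : b ∉ p := fun h => hbm (le_maximalIdeal hprime.ne_top h)
        have hbp' : b ∉ p' := fun h => hbm (le_maximalIdeal hprime'.ne_top h)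
        have hxa : ∀ q : Ideal T, q.IsPrime → b ∉ q → (x ∈ q ↔ a ∈ q) := by
          intro q hq hbq
          constructor
          · intro h; rw [← hxb]; exact Ideal.mul_mem_right _ _ h
          · intro h; rw [← hxb] at h; exact (hq.mem_or_mem h).resolve_right hbq
        constructor
        · intro hxp
          exact (hxa p' hprime' hbp').mpr
            (main p p' hp hp' ⟨i, hpi, hp'i⟩ hpp' a haA ((hxa p hprime hbp).mp hxp))
        · intro hxp'
          exact (hxa p hprime hbp).mpr
            (main p' p hp' hp ⟨i, hp'i, hpi⟩ (Ne.symm hpp') a haA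
              ((hxa p' hprime' hbp').mp hxp'))
  · intro p hpmin hns a _ hap
    exact nonsingular_minimal_torsion hpmin hns hap
end Part5

section Part6
variable {T : Type u} [CommRing T] [IsNoetherianRing T] [IsLocalRing T]
variable [IsAdicComplete (maximalIdeal T) T] {n : ℕ}

lemma key (hdim : 1 ≤ ringKrullDim T) (P : MinPartition T n) :
    ∀ (L : List T) (S : Subring T), IsCGIPSubring P S → (∀ x ∈ L, x ∈ S) →
    ∀ (c : T) (hcS : c ∈ S), c ∈ Ideal.span {x | x ∈ L} →
    ∃ (R : Subring T) (hSR : S ≤ R), IsCGIPSubring P R ∧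
      (⟨c, hSR hcS⟩ : ↥R) ∈ Ideal.span {y : ↥R | (y : T) ∈ L} := by
  intro L
  induction L with
  | nil =>
    intro S hS hmem c hcS hc
    have hc0 : c = 0 := by
      have hsp : Ideal.span {x : T | x ∈ ([] : List T)} = ⊥ := by
        have : {x : T | x ∈ ([] : List T)} = (∅ : Set T) := by ext x; simp
        rw [this, Ideal.span_empty]
      rwa [hsp, Ideal.mem_bot] at hc
    refine ⟨S, le_refl S, hS, ?_⟩
    have : (⟨c, hcS⟩ : ↥S) = 0 := Subtype.ext hc0
    rw [show (⟨c, (le_refl S) hcS⟩ : ↥S) = (⟨c, hcS⟩ : ↥S) from rfl, this]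
    exact Submodule.zero_mem _
  | cons s₁ L' IH =>
    intro S hS hmem c hcS hc
    have hs₁ : s₁ ∈ S := hmem s₁ (List.mem_cons_self)
    have hsetins : {x : T | x ∈ s₁ :: L'} = insert s₁ {x : T | x ∈ L'} := by
      ext x; simp [List.mem_cons]
    rw [hsetins, Ideal.mem_span_insert] at hc
    obtain ⟨t₁, r, hr, hceq⟩ := hc
    have hct : c - s₁ * t₁ ∈ Ideal.span {x : T | x ∈ L'} := by
      have : c - s₁ * t₁ = r := by rw [hceq]; ring
      rwa [this]
    obtain ⟨R₁, t', hSR₁, hCGIP₁, ht'R₁, hct'⟩ :=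
      step hdim P S hS s₁ hs₁ c hcS {x : T | x ∈ L'} (fun x hx => hmem x (List.mem_cons_of_mem _ hx)) t₁ hct
    have hs₁R₁ : s₁ ∈ R₁ := hSR₁ hs₁
    have hcR₁ : c ∈ R₁ := hSR₁ hcS
    have hc'R₁ : c - s₁ * t' ∈ R₁ := R₁.sub_mem hcR₁ (R₁.mul_mem hs₁R₁ ht'R₁)
    obtain ⟨R, hR₁R, hCGIP, hmemspan⟩ :=
      IH R₁ hCGIP₁ (fun x hx => hSR₁ (hmem x (List.mem_cons_of_mem _ hx)))
        (c - s₁ * t') hc'R₁ hct'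
    refine ⟨R, le_trans hSR₁ hR₁R, hCGIP, ?_⟩
    have hsplit : (⟨c, (le_trans hSR₁ hR₁R) hcS⟩ : ↥R)
        = (⟨s₁, hR₁R hs₁R₁⟩ : ↥R) * (⟨t', hR₁R ht'R₁⟩ : ↥R)
          + (⟨c - s₁ * t', hR₁R hc'R₁⟩ : ↥R) := by
      apply Subtype.ext
      show c = s₁ * t' + (c - s₁ * t')
      ring
    rw [hsplit]
    refine Submodule.add_mem _ ?_ ?_
    · refine Ideal.mul_mem_right _ _ (Ideal.subset_span ?_)
      show ((⟨s₁, hR₁R hs₁R₁⟩ : ↥R) : T) ∈ s₁ :: L'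
      exact List.mem_cons_self
    · refine Ideal.span_mono ?_ hmemspan
      intro y hy
      exact List.mem_cons_of_mem _ hy

end Part6

end Statement12Aux

/-- Let `(T, m)` be a complete local ring containing `ℚ` with
`dim T ≥ 1` and `P` a partition of `Min(T)` in which singular minimal primes are alone in
their class. Let `S` be a CGIP-subring of `T`, `I` a finitely generated ideal of `S`,
and `c ∈ IT ∩ S`. Then there is a CGIP-subring `R` of `T` with `S ⊆ R` and `c ∈ IR`. -/
theorem statement_12 (T : Type u) [CommRing T] [IsNoetherianRing T] [IsLocalRing T]
    [IsAdicComplete (IsLocalRing.maximalIdeal T) T] [Algebra ℚ T]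
    (hdim : 1 ≤ ringKrullDim T) {n : ℕ} (P : MinPartition T n)
    (S : Subring T) (hS : IsCGIPSubring P S)
    (I : Ideal ↥S) (hI : I.FG) (c : ↥S) (hc : (c : T) ∈ I.map S.subtype) :
    ∃ (R : Subring T) (hSR : S ≤ R), IsCGIPSubring P R ∧
      Subring.inclusion hSR c ∈ I.map (Subring.inclusion hSR) := by
  classical
  obtain ⟨fs, hfs⟩ := hI
  set L : List T := fs.toList.map (fun v : ↥S => (v : T)) with hLdef
  have hmemL : ∀ x ∈ L, x ∈ S := by
    intro x hx
    rw [hLdef] at hx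
    obtain ⟨v, _, rfl⟩ := List.mem_map.mp hx
    exact v.2
  have hsetL : {x : T | x ∈ L} = S.subtype '' (fs : Set ↥S) := by
    ext x
    constructor
    · intro hx
      obtain ⟨v, hv, he⟩ := List.mem_map.mp hx
      exact ⟨v, Finset.mem_coe.mpr (Finset.mem_toList.mp hv), he⟩
    · rintro ⟨v, hv, rfl⟩
      exact List.mem_map.mpr ⟨v, Finset.mem_toList.mpr (Finset.mem_coe.mp hv), rfl⟩
  have hcL : (c : T) ∈ Ideal.span {x : T | x ∈ L} := by
    rw [hsetL]
    rw [← hfs, Ideal.map_span] at hc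
    exact hc
  obtain ⟨R, hSR, hCGIP, hmemspan⟩ :=
    Statement12Aux.key hdim P L S hS hmemL (c : T) c.2 hcL
  refine ⟨R, hSR, hCGIP, ?_⟩
  have helt : Subring.inclusion hSR c = (⟨(c : T), hSR c.2⟩ : ↥R) := Subtype.ext rfl
  rw [helt]
  have hle : Ideal.span {y : ↥R | (y : T) ∈ L} ≤ I.map (Subring.inclusion hSR) := by
    rw [Ideal.span_le]
    intro y hy
    have hy' : (y : T) ∈ L := hy
    rw [hLdef] at hy'
    obtain ⟨v, hvfs, hve⟩ := List.mem_map.mp hy'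
    have hvI : v ∈ I := by
      rw [← hfs]
      exact Ideal.subset_span (Finset.mem_coe.mpr (Finset.mem_toList.mp hvfs))
    have hyv : y = Subring.inclusion hSR v := Subtype.ext hve.symm
    rw [SetLike.mem_coe, hyv]
    exact Ideal.mem_map_of_mem _ hvI
  exact hle hmemspan
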